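/- For every α > 0 there is a unique β = p_{+−1}(α) with β > α and λ'(β) = λ'(β − α); moreover this solution satisfies max(α, γ₀) ≤ β ≤ α + γ₀ and 0 < β − α ≤ γ₀. -/

import Mathlib

/-!
On `(0, ∞)` the function `λ'` is valley-shaped with its minimum at `γ₀`: `4λ'²` equals
`(1 + 3x²)² / (x + x³)`, whose derivative has the sign of
`3x⁴ + 6x² − 1 = 3(x² − γ₀²)(x² + γ₀² + 2)`, and `λ'(x) → ∞` as `x → 0⁺`.
For any such valley-shaped `f`, a solution `s = β − α > 0` of `f(s + α) = f(s)` must straddle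
the minimum, `s ≤ γ₀ ≤ s + α`. On that range `s ↦ f(s + α) − f(s)` is strictly increasing,
which gives uniqueness, and it runs from `−∞` near `0` to `f(γ₀ + α) − f(γ₀) > 0`, which gives
existence by the intermediate value theorem.
-/

noncomputable section

open Real Set Filter Topology

def lam (x : ℝ) : ℝ := Real.sqrt (x + x ^ 3)

def gamma0 : ℝ := Real.sqrt ((2 * Real.sqrt 3 - 3) / 3)

section ShiftedLevel

variable {f : ℝ → ℝ} {c α : ℝ}

theorem mem_of_map_add_eq (hα : 0 < α) (hanti : StrictAntiOn f (Ioc 0 c))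
    (hmono : StrictMonoOn f (Ici c)) {s : ℝ} (hs : 0 < s) (h : f (s + α) = f s) :
    s ∈ Ioc 0 c ∩ Ici (c - α) := by
  refine ⟨⟨hs, ?_⟩, ?_⟩
  · by_contra! hcs
    have : f s < f (s + α) :=
      hmono (mem_Ici.2 hcs.le) (mem_Ici.2 (by linarith)) (by linarith)
    exact this.ne' h
  · by_contra! hsc
    rw [mem_Ici, not_le] at hsc
    have : f (s + α) < f s :=
      hanti ⟨hs, by linarith⟩ ⟨by linarith, by linarith⟩ (by linarith)
    exact this.ne h

theorem strictMonoOn_map_add_sub (hanti : StrictAntiOn f (Ioc 0 c))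
    (hmono : StrictMonoOn f (Ici c)) :
    StrictMonoOn (fun s ↦ f (s + α) - f s) (Ioc 0 c ∩ Ici (c - α)) := by
  rintro s ⟨hs, hsα⟩ s' ⟨hs', hs'α⟩ hss'
  have hleft : f s' < f s := hanti hs hs' hss'
  have hright : f (s + α) < f (s' + α) :=
    hmono (mem_Ici.2 (by linarith [mem_Ici.1 hsα])) (mem_Ici.2 (by linarith [mem_Ici.1 hs'α]))
      (by linarith)
  dsimp only
  linarith

theorem exists_mem_Ioc_map_add_eq (hc : 0 < c) (hα : 0 < α) (hcont : ContinuousOn f (Ioi 0))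
    (hlim : Tendsto f (𝓝[>] 0) atTop) (hmono : StrictMonoOn f (Ici c)) :
    ∃ s ∈ Ioc 0 c, f (s + α) = f s := by
  have hshift : Tendsto (fun t ↦ f (t + α)) (𝓝[>] 0) (𝓝 (f α)) := by
    have : ContinuousAt (fun t ↦ f (t + α)) 0 :=
      (hcont.continuousAt (Ioi_mem_nhds (by simpa using hα))).comp (by fun_prop)
    simpa using this.tendsto.mono_left (nhdsWithin_le_nhds (s := Ioi 0))
  have hdiff : Tendsto (fun t ↦ f (t + α) - f t) (𝓝[>] 0) atBot := by
    simpa only [sub_eq_add_neg, Function.comp_def] using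
      hshift.add_atBot (tendsto_neg_atTop_atBot.comp hlim)
  obtain ⟨t₀, hneg, ht₀⟩ := ((hdiff.eventually (eventually_lt_atBot 0)).and
    (Ioo_mem_nhdsGT hc)).exists
  have hpos : 0 < f (c + α) - f c := sub_pos.2 <|
    hmono self_mem_Ici (mem_Ici.2 (by linarith)) (by linarith)
  have hsub : Icc t₀ c ⊆ Ioi 0 := fun x hx ↦ ht₀.1.trans_le hx.1
  have hcont' : ContinuousOn (fun t ↦ f (t + α) - f t) (Icc t₀ c) :=
    (hcont.comp (by fun_prop) fun x hx ↦ mem_Ioi.2 (by linarith [mem_Ioi.1 (hsub hx)])).sub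
      (hcont.mono hsub)
  obtain ⟨s, hs, hzero⟩ := intermediate_value_Icc ht₀.2.le hcont' ⟨hneg.le, hpos.le⟩
  exact ⟨s, ⟨hsub hs, hs.2⟩, sub_eq_zero.1 hzero⟩

end ShiftedLevel

theorem three_halves_lt_sqrt_three : (3 / 2 : ℝ) < √3 := by
  rw [lt_sqrt (by norm_num)]; norm_num

theorem gamma0_sq : gamma0 ^ 2 = (2 * √3 - 3) / 3 :=
  sq_sqrt (by linarith [three_halves_lt_sqrt_three])

theorem gamma0_pos : 0 < gamma0 :=
  sqrt_pos.2 (by linarith [three_halves_lt_sqrt_three])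

theorem quartic_eq_mul (x : ℝ) :
    3 * x ^ 4 + 6 * x ^ 2 - 1 = 3 * (x ^ 2 - gamma0 ^ 2) * (x ^ 2 + gamma0 ^ 2 + 2) := by
  have h3 : √3 ^ 2 = 3 := sq_sqrt (by norm_num)
  rw [gamma0_sq]
  linear_combination (4 / 3 : ℝ) * h3

theorem hasDerivAt_add_pow_three (x : ℝ) :
    HasDerivAt (fun y : ℝ ↦ y + y ^ 3) (1 + 3 * x ^ 2) x := by
  simpa using (hasDerivAt_id' x).fun_add (hasDerivAt_pow 3 x)

theorem hasDerivAt_lam {x : ℝ} (hx : 0 < x) :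
    HasDerivAt lam ((1 + 3 * x ^ 2) / (2 * √(x + x ^ 3))) x :=
  (hasDerivAt_add_pow_three x).sqrt (by positivity)

theorem deriv_lam {x : ℝ} (hx : 0 < x) :
    deriv lam x = (1 + 3 * x ^ 2) / (2 * √(x + x ^ 3)) :=
  (hasDerivAt_lam hx).deriv

theorem deriv_lam_pos {x : ℝ} (hx : 0 < x) : 0 < deriv lam x := by
  rw [deriv_lam hx]; positivity

def fourDerivLamSq (x : ℝ) : ℝ := (1 + 3 * x ^ 2) ^ 2 / (x + x ^ 3)

theorem deriv_lam_sq {x : ℝ} (hx : 0 < x) : 4 * deriv lam x ^ 2 = fourDerivLamSq x := by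
  rw [deriv_lam hx, fourDerivLamSq, div_pow, mul_pow, sq_sqrt (by positivity)]
  field_simp
  norm_num

theorem deriv_lam_lt_deriv_lam_iff {x y : ℝ} (hx : 0 < x) (hy : 0 < y) :
    deriv lam x < deriv lam y ↔ fourDerivLamSq x < fourDerivLamSq y := by
  rw [← deriv_lam_sq hx, ← deriv_lam_sq hy, mul_lt_mul_iff_right₀ (by norm_num),
    pow_lt_pow_iff_left₀ (deriv_lam_pos hx).le (deriv_lam_pos hy).le two_ne_zero]

theorem deriv_fourDerivLamSq {x : ℝ} (hx : 0 < x) :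
    deriv fourDerivLamSq x
      = (1 + 3 * x ^ 2) * (3 * x ^ 4 + 6 * x ^ 2 - 1) / (x + x ^ 3) ^ 2 := by
  have hnum : HasDerivAt (fun y : ℝ ↦ (1 + 3 * y ^ 2) ^ 2) (2 * (1 + 3 * x ^ 2) * (6 * x)) x :=
    ((((hasDerivAt_pow 2 x).const_mul 3).const_add 1).fun_pow 2).congr_deriv (by ring)
  rw [show fourDerivLamSq = fun y ↦ (1 + 3 * y ^ 2) ^ 2 / (y + y ^ 3) from rfl,
    (hnum.fun_div (hasDerivAt_add_pow_three x) (by positivity)).deriv]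
  field_simp
  ring

theorem continuousOn_fourDerivLamSq : ContinuousOn fourDerivLamSq (Ioi 0) :=
  ContinuousOn.div (by fun_prop) (by fun_prop) fun x (hx : 0 < x) ↦ by positivity

theorem strictAntiOn_fourDerivLamSq : StrictAntiOn fourDerivLamSq (Ioc 0 gamma0) := by
  refine strictAntiOn_of_deriv_neg (convex_Ioc 0 gamma0)
    (continuousOn_fourDerivLamSq.mono Ioc_subset_Ioi_self) ?_
  rw [interior_Ioc]
  rintro x ⟨hx, hxγ⟩
  have hsq : x ^ 2 < gamma0 ^ 2 := by gcongr
  rw [deriv_fourDerivLamSq hx, quartic_eq_mul]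
  exact div_neg_of_neg_of_pos (mul_neg_of_pos_of_neg (by positivity)
    (mul_neg_of_neg_of_pos (mul_neg_of_pos_of_neg three_pos (sub_neg.2 hsq)) (by positivity)))
    (by positivity)

theorem strictMonoOn_fourDerivLamSq : StrictMonoOn fourDerivLamSq (Ici gamma0) := by
  refine strictMonoOn_of_deriv_pos (convex_Ici gamma0)
    (continuousOn_fourDerivLamSq.mono fun x hx ↦ gamma0_pos.trans_le hx) ?_
  rw [interior_Ici]
  intro x (hγx : gamma0 < x)
  have hx : 0 < x := gamma0_pos.trans hγx
  have hsq : gamma0 ^ 2 < x ^ 2 := pow_lt_pow_left₀ hγx gamma0_pos.le two_ne_zero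
  rw [deriv_fourDerivLamSq hx, quartic_eq_mul]
  exact div_pos (mul_pos (by positivity)
    (mul_pos (mul_pos three_pos (sub_pos.2 hsq)) (by positivity))) (by positivity)

theorem strictAntiOn_deriv_lam : StrictAntiOn (deriv lam) (Ioc 0 gamma0) := fun _ hx _ hy hxy ↦
  (deriv_lam_lt_deriv_lam_iff hy.1 hx.1).2 (strictAntiOn_fourDerivLamSq hx hy hxy)

theorem strictMonoOn_deriv_lam : StrictMonoOn (deriv lam) (Ici gamma0) := fun _ hx _ hy hxy ↦
  (deriv_lam_lt_deriv_lam_iff (gamma0_pos.trans_le hx) (gamma0_pos.trans_le hy)).2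
    (strictMonoOn_fourDerivLamSq hx hy hxy)

theorem continuousOn_deriv_lam : ContinuousOn (deriv lam) (Ioi 0) :=
  ContinuousOn.congr (f := fun x ↦ (1 + 3 * x ^ 2) / (2 * √(x + x ^ 3)))
    (ContinuousOn.div (by fun_prop) (by fun_prop) fun x (hx : 0 < x) ↦ by positivity)
    fun _ hx ↦ deriv_lam hx

theorem tendsto_deriv_lam_nhdsGT_zero : Tendsto (deriv lam) (𝓝[>] 0) atTop := by
  have hden : Tendsto (fun x : ℝ ↦ 2 * √(x + x ^ 3)) (𝓝[>] 0) (𝓝[>] 0) := by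
    refine tendsto_nhdsWithin_iff.2 ⟨?_, ?_⟩
    · have : Continuous (fun x : ℝ ↦ 2 * √(x + x ^ 3)) := by fun_prop
      simpa using (this.tendsto 0).mono_left nhdsWithin_le_nhds
    · filter_upwards [self_mem_nhdsWithin] with x (hx : 0 < x)
      exact mem_Ioi.2 (by positivity)
  refine tendsto_atTop_mono' _ ?_ hden.inv_tendsto_nhdsGT_zero
  filter_upwards [self_mem_nhdsWithin] with x (hx : 0 < x)
  rw [deriv_lam hx, Pi.inv_apply, inv_eq_one_div]
  gcongr
  exact le_add_of_nonneg_right (by positivity)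

/-- For every α > 0 there is a unique β = p₊₋₁(α) with β > α and λ'(β) = λ'(β − α);
it satisfies max(α, γ₀) ≤ β ≤ α + γ₀ and 0 < β − α ≤ γ₀. -/
theorem stmt10 (α : ℝ) (hα : 0 < α) :
    ∃ β : ℝ, (α < β ∧ deriv lam β = deriv lam (β - α)) ∧
      (∀ β' : ℝ, α < β' → deriv lam β' = deriv lam (β' - α) → β' = β) ∧
      max α gamma0 ≤ β ∧ β ≤ α + gamma0 ∧ 0 < β - α ∧ β - α ≤ gamma0 := by
  have hsol : ∀ s, 0 < s → deriv lam (s + α) = deriv lam s →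
      s ∈ Ioc 0 gamma0 ∩ Ici (gamma0 - α) := fun _ hs h ↦
    mem_of_map_add_eq hα strictAntiOn_deriv_lam strictMonoOn_deriv_lam hs h
  obtain ⟨t, ⟨ht, -⟩, heq⟩ := exists_mem_Ioc_map_add_eq gamma0_pos hα continuousOn_deriv_lam
    tendsto_deriv_lam_nhdsGT_zero strictMonoOn_deriv_lam
  obtain ⟨⟨-, htγ⟩, hγt⟩ := hsol t ht heq
  refine ⟨t + α, ⟨by linarith, by rwa [add_sub_cancel_right]⟩, fun β hβ hβeq ↦ ?_,
    max_le (by linarith) (by linarith [mem_Ici.1 hγt]), by linarith,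
    by rwa [add_sub_cancel_right], by rwa [add_sub_cancel_right]⟩
  have hs : 0 < β - α := sub_pos.2 hβ
  have hβeq' : deriv lam (β - α + α) = deriv lam (β - α) := by rwa [sub_add_cancel]
  have hβt : β - α = t := (strictMonoOn_map_add_sub strictAntiOn_deriv_lam
    strictMonoOn_deriv_lam).injOn (hsol _ hs hβeq') (hsol t ht heq)
    (by simp only [hβeq', heq, sub_self])
  linarith

end
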